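/- Let K be a field and v_0 = 1 - x_3 - x_0^2 + x_0 x_1 ∈ K[M]. For any nonzero v ∈ K[M] there exist w_1 ∈ K[M] and w_2, w_3 ∈ K[M_1] such that v = v_0 w_1 + x_0 w_2 + w_3, with deg(x_0 w_2) ≤ deg v and deg w_3 ≤ deg v. -/

import Mathlib

/-!
Every element of `M` is `x₀ ^ k * m` with `m ∈ M₁`, of length `k + |m|`, because
`x_j x₀ = x₀ x_{j+1}` for `j ≥ 1`. Modulo `v₀`,
`x₀ ^ (k + 2) * m ≡ x₀ ^ k * m - x₀ ^ k * x_{k+3} * m + x₀ ^ (k + 1) * x_{k+1} * m`,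
where every term is no longer than the left side and has a smaller power of `x₀`. Induction on `k`
therefore leaves only monomials `m` and `x₀ * m` with `m ∈ M₁`: the terms `w₃` and `x₀ * w₂`.
-/

/-- The defining relation of Thompson's monoid: `x_j x_i = x_i x_{j+1}` for `i < j`. -/
def thompsonRel : FreeMonoid ℕ → FreeMonoid ℕ → Prop := fun a b =>
  ∃ i j : ℕ, i < j ∧ a = FreeMonoid.of j * FreeMonoid.of i ∧
    b = FreeMonoid.of i * FreeMonoid.of (j + 1)

/-- The congruence on the free monoid generated by the Thompson relations. -/
def thompsonCon : Con (FreeMonoid ℕ) := conGen thompsonRel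

/-- Thompson's monoid `M`. -/
abbrev ThompsonM := thompsonCon.Quotient

/-- The generators `x_n` of Thompson's monoid. -/
def xM (n : ℕ) : ThompsonM := thompsonCon.mk' (FreeMonoid.of n)

/-- The shift endomorphism `φ : M → M`, `x_i ↦ x_{i+1}`. -/
def shiftM : ThompsonM →* ThompsonM :=
  Con.lift _ ((Con.mk' thompsonCon).comp (FreeMonoid.map Nat.succ)) (by
    apply Con.conGen_le.2
    rintro a b ⟨i, j, hij, rfl, rfl⟩
    simp only [Con.ker_rel, MonoidHom.comp_apply, map_mul, FreeMonoid.map_of]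
    exact Con.eq _ |>.2 (ConGen.Rel.of _ _ ⟨i + 1, j + 1, by omega, rfl, rfl⟩))

/-- The relators of Thompson's group `F` (infinite presentation). -/
def thompsonRels : Set (FreeGroup ℕ) :=
  {w | ∃ i j : ℕ, i < j ∧
    w = FreeGroup.of j * FreeGroup.of i * (FreeGroup.of i * FreeGroup.of (j + 1))⁻¹}

/-- Thompson's group `F`. -/
abbrev ThompsonF := PresentedGroup thompsonRels

/-- The generators `x_n` of Thompson's group. -/
def xF (n : ℕ) : ThompsonF := PresentedGroup.of n

/-- Word length, as a monoid homomorphism on the free monoid. -/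
def lenHom : FreeMonoid ℕ →* Multiplicative ℕ where
  toFun w := Multiplicative.ofAdd w.length
  map_one' := by simp
  map_mul' a b := by
    simp [FreeMonoid.length_mul, ofAdd_add]

/-- Length is well defined on Thompson's monoid. -/
def lenM : ThompsonM →* Multiplicative ℕ :=
  Con.lift _ lenHom (by
    apply Con.conGen_le.2
    rintro a b ⟨i, j, hij, rfl, rfl⟩
    simp only [Con.ker_rel]
    show Multiplicative.ofAdd _ = Multiplicative.ofAdd _
    simp [FreeMonoid.length_mul])

/-- The length of an element of Thompson's monoid. -/
def mlen (g : ThompsonM) : ℕ := Multiplicative.toAdd (lenM g)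

/-- The degree of an element of the monoid ring `K[M]`. -/
noncomputable def mdeg {K : Type*} [Field K] (a : MonoidAlgebra K ThompsonM) : ℕ :=
  a.coeff.support.sup mlen

/-- The submonoid `M_i` of `M` generated by `x_i, x_{i+1}, …`. -/
def Msub (i : ℕ) : Submonoid ThompsonM :=
  Submonoid.closure {g | ∃ n : ℕ, i ≤ n ∧ g = xM n}

/-- The shift endomorphism of the monoid ring `K[M]` induced by `φ`. -/
noncomputable def shiftA (K : Type*) [Field K] :
    MonoidAlgebra K ThompsonM →+* MonoidAlgebra K ThompsonM :=
  MonoidAlgebra.mapDomainRingHom K shiftM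

/-- The natural homomorphism of Thompson's monoid into Thompson's group. -/
def iotaMF : ThompsonM →* ThompsonF :=
  Con.lift _ (FreeMonoid.lift xF) (by
    apply Con.conGen_le.2
    rintro a b ⟨i, j, hij, rfl, rfl⟩
    simp only [Con.ker_rel, map_mul, FreeMonoid.lift_eval_of]
    have h : (FreeGroup.of j * FreeGroup.of i *
        (FreeGroup.of i * FreeGroup.of (j + 1))⁻¹ : FreeGroup ℕ) ∈ thompsonRels :=
      ⟨i, j, hij, rfl⟩
    have h1 : PresentedGroup.mk thompsonRels
        (FreeGroup.of j * FreeGroup.of i * (FreeGroup.of i * FreeGroup.of (j + 1))⁻¹) = 1 := by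
      exact (QuotientGroup.eq_one_iff _).2 (Subgroup.subset_normalClosure h)
    have := h1
    rw [map_mul, map_mul, map_inv, map_mul, mul_inv_eq_one] at this
    simpa [xF, PresentedGroup.of] using this)

/-- The generator `x_n` as an element of the group ring `K[F]`. -/
noncomputable def XF (K : Type*) [Field K] (n : ℕ) : MonoidAlgebra K ThompsonF :=
  MonoidAlgebra.of K ThompsonF (xF n)

/-- The generator `x_n` as an element of the monoid ring `K[M]`. -/
noncomputable def XMa (K : Type*) [Field K] (n : ℕ) : MonoidAlgebra K ThompsonM :=
  MonoidAlgebra.of K ThompsonM (xM n)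

section Monoid

lemma xM_mul_xM_of_lt {i j : ℕ} (h : i < j) : xM j * xM i = xM i * xM (j + 1) :=
  (map_mul thompsonCon.mk' _ _).symm.trans <|
    (Con.eq _).2 (ConGen.Rel.of _ _ ⟨i, j, h, rfl, rfl⟩) |>.trans (map_mul thompsonCon.mk' _ _)

lemma xM_mul_xM_zero_pow {j : ℕ} (hj : 0 < j) (k : ℕ) :
    xM j * xM 0 ^ k = xM 0 ^ k * xM (j + k) := by
  induction k generalizing j with
  | zero => simp
  | succ k ih =>
    rw [pow_succ', ← mul_assoc, xM_mul_xM_of_lt hj, mul_assoc, ih (Nat.succ_pos j), ← mul_assoc,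
      ← pow_succ', Nat.succ_add_eq_add_succ]

lemma mlen_mul (g h : ThompsonM) : mlen (g * h) = mlen g + mlen h := by
  simp [mlen]

lemma mlen_xM (n : ℕ) : mlen (xM n) = 1 := rfl

lemma mlen_xM_pow_mul (n k : ℕ) (m : ThompsonM) : mlen (xM n ^ k * m) = k + mlen m := by
  rw [mlen_mul, mlen, map_pow, toAdd_pow, ← mlen, mlen_xM, smul_eq_mul, mul_one]

lemma xM_mem_Msub {i n : ℕ} (h : i ≤ n) : xM n ∈ Msub i :=
  Submonoid.subset_closure ⟨n, h, rfl⟩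

lemma exists_eq_xM_zero_pow_mul (g : ThompsonM) : ∃ k, ∃ m ∈ Msub 1, g = xM 0 ^ k * m := by
  induction g using Con.induction_on with | _ w
  induction w using FreeMonoid.recOn with
  | one => exact ⟨0, 1, one_mem _, by simp⟩
  | of_mul a w ih =>
    obtain ⟨k, m, hm, hw⟩ := ih
    change ∃ k, ∃ m ∈ Msub 1, xM a * (w : ThompsonM) = _
    rw [hw]
    rcases Nat.eq_zero_or_pos a with rfl | ha
    · exact ⟨k + 1, m, hm, by rw [pow_succ', mul_assoc]⟩
    · exact ⟨k, xM (a + k) * m, mul_mem (xM_mem_Msub (by omega)) hm,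
        by rw [← mul_assoc, xM_mul_xM_zero_pow ha, mul_assoc]⟩

end Monoid

open MonoidAlgebra

section Algebra

variable (K : Type*) [Field K]

noncomputable def v₀ : MonoidAlgebra K ThompsonM :=
  1 - XMa K 3 - XMa K 0 ^ 2 + XMa K 0 * XMa K 1

/-- The elements admitting a division by `v₀` as in the theorem with degree bound `n`. Being a
subspace, it suffices to show that it contains the monomials of length at most `n`. -/
noncomputable def remainderSpace (n : ℕ) : Submodule K (MonoidAlgebra K ThompsonM) :=
  LinearMap.range (LinearMap.mulLeft K (v₀ K)) ⊔
    ((supported K K (Msub 1 : Set ThompsonM)).map (LinearMap.mulLeft K (XMa K 0)) ⊓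
      supported K K {g | mlen g ≤ n}) ⊔
    (supported K K (Msub 1 : Set ThompsonM) ⊓ supported K K {g | mlen g ≤ n})

variable {K}

lemma mdeg_le_iff_mem_supported {a : MonoidAlgebra K ThompsonM} {n : ℕ} :
    mdeg a ≤ n ↔ a ∈ supported K K {g | mlen g ≤ n} :=
  Finset.sup_le_iff

lemma v₀_mul_mem_remainderSpace (n : ℕ) (w : MonoidAlgebra K ThompsonM) :
    v₀ K * w ∈ remainderSpace K n :=
  Submodule.mem_sup_left <| Submodule.mem_sup_left ⟨w, rfl⟩

lemma of_mem_remainderSpace_of_mem_Msub {m : ThompsonM} (hm : m ∈ Msub 1) {n : ℕ}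
    (hn : mlen m ≤ n) : of K ThompsonM m ∈ remainderSpace K n :=
  Submodule.mem_sup_right
    ⟨Finsupp.single_mem_supported K 1 hm, Finsupp.single_mem_supported K 1 hn⟩

lemma of_xM_zero_mul_mem_remainderSpace {m : ThompsonM} (hm : m ∈ Msub 1) {n : ℕ}
    (hn : 1 + mlen m ≤ n) : of K ThompsonM (xM 0 * m) ∈ remainderSpace K n := by
  refine Submodule.mem_sup_left <| Submodule.mem_sup_right
    ⟨⟨of K ThompsonM m, Finsupp.single_mem_supported K 1 hm, (map_mul _ _ _).symm⟩,
      Finsupp.single_mem_supported K 1 ?_⟩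
  simpa [mlen_mul, mlen_xM] using hn

/-- Expand `v₀ * x₀ ^ k * m` and move `x₃`, `x₁` to the right of `x₀ ^ k`. -/
lemma of_xM_zero_pow_add_two_mul (k : ℕ) (m : ThompsonM) :
    of K ThompsonM (xM 0 ^ (k + 2) * m) =
      v₀ K * -of K ThompsonM (xM 0 ^ k * m) + of K ThompsonM (xM 0 ^ k * m)
        - of K ThompsonM (xM 0 ^ k * (xM (3 + k) * m))
        + of K ThompsonM (xM 0 ^ (k + 1) * (xM (1 + k) * m)) := by
  have h₃ : of K ThompsonM (xM 0 ^ k * (xM (3 + k) * m)) =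
      XMa K 3 * of K ThompsonM (xM 0 ^ k * m) := by
    rw [XMa, ← map_mul, ← mul_assoc, ← mul_assoc, xM_mul_xM_zero_pow three_pos]
  have h₁ : of K ThompsonM (xM 0 ^ (k + 1) * (xM (1 + k) * m)) =
      XMa K 0 * XMa K 1 * of K ThompsonM (xM 0 ^ k * m) := by
    rw [XMa, XMa, ← map_mul, ← map_mul, mul_assoc, ← mul_assoc (xM 1),
      xM_mul_xM_zero_pow one_pos, pow_succ', mul_assoc, mul_assoc]
  have h₂ : of K ThompsonM (xM 0 ^ (k + 2) * m) =
      XMa K 0 ^ 2 * of K ThompsonM (xM 0 ^ k * m) := by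
    rw [XMa, ← map_pow, ← map_mul, ← mul_assoc, ← pow_add, add_comm]
  rw [h₁, h₂, h₃, v₀]
  noncomm_ring

lemma of_xM_zero_pow_mul_mem_remainderSpace (k : ℕ) {m : ThompsonM} (hm : m ∈ Msub 1) {n : ℕ}
    (hn : k + mlen m ≤ n) : of K ThompsonM (xM 0 ^ k * m) ∈ remainderSpace K n := by
  induction k using Nat.strong_induction_on generalizing m with
  | _ k ih =>
  match k, ih with
  | 0, _ => simpa using of_mem_remainderSpace_of_mem_Msub hm (by omega)
  | 1, _ => simpa using of_xM_zero_mul_mem_remainderSpace hm hn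
  | k + 2, ih =>
    have hm₃ : xM (3 + k) * m ∈ Msub 1 := mul_mem (xM_mem_Msub (by omega)) hm
    have hm₁ : xM (1 + k) * m ∈ Msub 1 := mul_mem (xM_mem_Msub (by omega)) hm
    rw [of_xM_zero_pow_add_two_mul]
    refine add_mem (sub_mem (add_mem (v₀_mul_mem_remainderSpace n _) ?_) ?_) ?_
    · exact ih k (by omega) hm (by omega)
    · exact ih k (by omega) hm₃ (by rw [mlen_mul, mlen_xM]; omega)
    · exact ih (k + 1) (by omega) hm₁ (by rw [mlen_mul, mlen_xM]; omega)

lemma supported_mlen_le_le_remainderSpace (n : ℕ) :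
    supported K K {g | mlen g ≤ n} ≤ remainderSpace K n := by
  rw [supported_eq_span_single, Submodule.span_le]
  rintro _ ⟨g, hg, rfl⟩
  obtain ⟨k, m, hm, rfl⟩ := exists_eq_xM_zero_pow_mul g
  exact of_xM_zero_pow_mul_mem_remainderSpace k hm (by rwa [← mlen_xM_pow_mul])

end Algebra

theorem stmt13_general (K : Type*) [Field K] (v : MonoidAlgebra K ThompsonM) :
    ∃ w₁ w₂ w₃ : MonoidAlgebra K ThompsonM,
      (∀ g ∈ w₂.coeff.support, g ∈ Msub 1) ∧ (∀ g ∈ w₃.coeff.support, g ∈ Msub 1) ∧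
      v = (1 - XMa K 3 - XMa K 0 ^ 2 + XMa K 0 * XMa K 1) * w₁ + XMa K 0 * w₂ + w₃ ∧
      mdeg (XMa K 0 * w₂) ≤ mdeg v ∧ mdeg w₃ ≤ mdeg v := by
  have hv : v ∈ remainderSpace K (mdeg v) :=
    supported_mlen_le_le_remainderSpace _ (mdeg_le_iff_mem_supported.1 le_rfl)
  obtain ⟨u, hu, w₃, ⟨hw₃, hdeg₃⟩, rfl⟩ := Submodule.mem_sup.1 hv
  obtain ⟨_, ⟨w₁, rfl⟩, _, ⟨⟨w₂, hw₂, rfl⟩, hdeg₂⟩, rfl⟩ := Submodule.mem_sup.1 hu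
  exact ⟨w₁, w₂, w₃, hw₂, hw₃, rfl, mdeg_le_iff_mem_supported.2 hdeg₂,
    mdeg_le_iff_mem_supported.2 hdeg₃⟩

/-- division with remainder by `v_0 = 1 - x_3 - x_0² + x_0 x_1`:
any nonzero `v ∈ K[M]` can be written `v = v_0 w_1 + x_0 w_2 + w_3` with
`w_2, w_3 ∈ K[M_1]`, `deg(x_0 w_2) ≤ deg v` and `deg w_3 ≤ deg v`. -/
theorem stmt13 (K : Type*) [Field K] (v : MonoidAlgebra K ThompsonM) (hv : v ≠ 0) :
    ∃ w₁ w₂ w₃ : MonoidAlgebra K ThompsonM,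
      (∀ g ∈ w₂.coeff.support, g ∈ Msub 1) ∧ (∀ g ∈ w₃.coeff.support, g ∈ Msub 1) ∧
      v = (1 - XMa K 3 - XMa K 0 ^ 2 + XMa K 0 * XMa K 1) * w₁ + XMa K 0 * w₂ + w₃ ∧
      mdeg (XMa K 0 * w₂) ≤ mdeg v ∧ mdeg w₃ ≤ mdeg v :=
  stmt13_general K v
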